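/- Let (Ω, ℱ, μ) be a probability space, 1 ≤ p < ∞, a < b, θ ∈ (0,1], θ' ∈ (0,θ], and c₃ ≥ 0. Let (Y_t)_{t∈[a,b]} be a family of real random variables in L^p(μ) with ‖Y_t − Y_s‖_p ≤ c₃ (∫_s^t (b−r)^{θ−1} dr)^{1/2} for all a ≤ s < t ≤ b. For n ≥ 1 let (t_k)_{k=0}^n be the θ'-net on [a,b]. Then for all n ≥ 1, all k ∈ {1, …, n} and all t ∈ (t_{k−1}, t_k] one has ‖Y_t − Y_{t_{k−1}}‖_p ≤ c₃ (b−a)^{θ/2} (θ')^{−1/2} n^{−1/2}. -/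

import Mathlib

open MeasureTheory
open scoped ENNReal

/-!
The increment bound is the square root of
`∫_s^t (b - r)^(θ-1) dr = ((b - s)^θ - (b - t)^θ) / θ`, which increases with `t`, so the
worst case is `t = t_k`. Along the `θ'`-net, `(b - t_k)^θ = (b - a)^θ (1 - k/n)^α` with
`α = θ/θ' ≥ 1` is a power of the uniform grid of step `1/n` in `[0, 1]`, and on `[0, 1]`
Bernoulli's inequality gives `x^α - y^α ≤ α (x - y)`. Hence the integral over a net interval
is at most `(b - a)^θ / (θ' n)`.
-/

/-- The `θ'`-net `(t_k^{n,θ'})_{k=0}^n` on `[a,b]`: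
`t_k := a + (b−a) (1 − (1 − k/n)^{1/θ'})`. -/
noncomputable def thetaNet (θ a b : ℝ) (n k : ℕ) : ℝ :=
  a + (b - a) * (1 - (1 - (k : ℝ) / (n : ℝ)) ^ ((1 : ℝ) / θ))

namespace Real

theorem rpow_sub_rpow_le_mul_sub {α x y : ℝ} (hα : 1 ≤ α) (hy : 0 ≤ y) (hyx : y ≤ x)
    (hx : x ≤ 1) : x ^ α - y ^ α ≤ α * (x - y) := by
  rcases hyx.eq_or_lt with rfl | hyx
  · simp
  have hx0 : 0 < x := hy.trans_lt hyx
  have hbernoulli : 1 + α * (y / x - 1) ≤ (y / x) ^ α := by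
    simpa using one_add_mul_self_le_rpow_one_add
      (by linarith [div_nonneg hy hx0.le] : -1 ≤ y / x - 1) hα
  have hyα : y ^ α = x ^ α * (y / x) ^ α := by
    rw [← mul_rpow hx0.le (div_nonneg hy hx0.le), mul_div_cancel₀ _ hx0.ne']
  have hxα : x ^ α = x * x ^ (α - 1) := by
    rw [← rpow_one_add' hx0.le (by linarith)]; ring_nf
  calc x ^ α - y ^ α ≤ x ^ α - x ^ α * (1 + α * (y / x - 1)) := by
        rw [hyα]; gcongr
    _ = α * x ^ (α - 1) * (x - y) := by rw [hxα]; field_simp; ring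
    _ ≤ α * 1 * (x - y) := by
        gcongr
        exact rpow_le_one hx0.le hx (by linarith)
    _ = α * (x - y) := by ring

end Real

theorem intervalIntegral.integral_sub_rpow_sub_one {θ : ℝ} (hθ : 0 < θ) (b s t : ℝ) :
    ∫ r in s..t, (b - r) ^ (θ - 1) = ((b - s) ^ θ - (b - t) ^ θ) / θ := by
  rw [intervalIntegral.integral_comp_sub_left (fun x : ℝ => x ^ (θ - 1)) b,
    integral_rpow (Or.inl (by linarith)), sub_add_cancel]

theorem intervalIntegral.integral_sub_rpow_sub_one_mono_right {θ : ℝ} (hθ : 0 < θ)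
    {b s t t' : ℝ} (htt' : t ≤ t') (ht' : t' ≤ b) :
    ∫ r in s..t, (b - r) ^ (θ - 1) ≤ ∫ r in s..t', (b - r) ^ (θ - 1) := by
  simp only [intervalIntegral.integral_sub_rpow_sub_one hθ]
  gcongr

section thetaNet

variable {θ a b : ℝ} {n k : ℕ}

theorem sub_thetaNet (θ a b : ℝ) (n k : ℕ) :
    b - thetaNet θ a b n k = (b - a) * (1 - k / n) ^ (1 / θ) := by
  unfold thetaNet; ring

theorem one_sub_div_mem_Icc (hk : k ≤ n) : 1 - (k : ℝ) / n ∈ Set.Icc 0 1 := by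
  constructor
  · rcases n.eq_zero_or_pos with rfl | hn
    · simp
    · rw [sub_nonneg, div_le_one (by positivity)]; exact_mod_cast hk
  · simp only [sub_le_self_iff]; positivity

theorem thetaNet_le_right (hab : a ≤ b) (hk : k ≤ n) : thetaNet θ a b n k ≤ b := by
  rw [← sub_nonneg, sub_thetaNet]
  exact mul_nonneg (sub_nonneg.2 hab) (Real.rpow_nonneg (one_sub_div_mem_Icc hk).1 _)

theorem left_le_thetaNet (hθ : 0 ≤ θ) (hab : a ≤ b) (hk : k ≤ n) :
    a ≤ thetaNet θ a b n k := by
  have h := one_sub_div_mem_Icc hk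
  have hpow : (1 - (k : ℝ) / n) ^ (1 / θ) ≤ 1 :=
    Real.rpow_le_one h.1 h.2 (one_div_nonneg.2 hθ)
  unfold thetaNet
  nlinarith

theorem rpow_sub_thetaNet (θ θ' : ℝ) (hab : a ≤ b) (hk : k ≤ n) :
    (b - thetaNet θ' a b n k) ^ θ = (b - a) ^ θ * (1 - k / n) ^ (θ / θ') := by
  have h := one_sub_div_mem_Icc hk
  rw [sub_thetaNet, Real.mul_rpow (sub_nonneg.2 hab) (Real.rpow_nonneg h.1 _),
    ← Real.rpow_mul h.1, one_div_mul_eq_div]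

theorem integral_thetaNet_succ_le {θ' : ℝ} (hθ : 0 < θ) (hθ' : 0 < θ') (hθ'θ : θ' ≤ θ)
    (hab : a ≤ b) (hk : k < n) :
    ∫ r in thetaNet θ' a b n k..thetaNet θ' a b n (k + 1), (b - r) ^ (θ - 1)
      ≤ (b - a) ^ θ / (θ' * n) := by
  have hn : (0 : ℝ) < n := by exact_mod_cast k.zero_le.trans_lt hk
  rw [intervalIntegral.integral_sub_rpow_sub_one hθ, rpow_sub_thetaNet θ θ' hab hk.le,
    rpow_sub_thetaNet θ θ' hab hk, ← mul_sub]
  have hstep :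
      (1 - k / n : ℝ) ^ (θ / θ') - (1 - (k + 1 : ℕ) / n : ℝ) ^ (θ / θ') ≤ θ / θ' / n := by
    refine (Real.rpow_sub_rpow_le_mul_sub ((one_le_div hθ').2 hθ'θ) (one_sub_div_mem_Icc hk).1
      ?_ (one_sub_div_mem_Icc hk.le).2).trans_eq ?_
    · gcongr; simp
    · push_cast; field_simp; ring
  calc _ ≤ (b - a) ^ θ * (θ / θ' / n) / θ := by gcongr
    _ = (b - a) ^ θ / (θ' * n) := by field_simp

end thetaNet

theorem corollary_2_3_Y_part_abstract_general
    {Ω : Type*} {mΩ : MeasurableSpace Ω} (μ : Measure Ω)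
    (p : ℝ≥0∞)
    (a b θ θ' c₃ : ℝ) (hab : a < b) (hθ : θ ∈ Set.Ioc (0 : ℝ) 1)
    (hθ' : θ' ∈ Set.Ioc (0 : ℝ) θ) (hc₃ : 0 ≤ c₃)
    (Y : ℝ → Ω → ℝ)
    (hY : ∀ s t : ℝ, a ≤ s → s < t → t ≤ b →
      eLpNorm (Y t - Y s) p μ
        ≤ ENNReal.ofReal (c₃ * (∫ r in s..t, (b - r) ^ (θ - 1)) ^ ((1 : ℝ) / 2)))
    (n : ℕ) (k : ℕ) (hk1 : 1 ≤ k) (hk2 : k ≤ n)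
    (t : ℝ) (ht : t ∈ Set.Ioc (thetaNet θ' a b n (k - 1)) (thetaNet θ' a b n k)) :
    eLpNorm (Y t - Y (thetaNet θ' a b n (k - 1))) p μ
      ≤ ENNReal.ofReal
          (c₃ * (b - a) ^ (θ / 2) * θ' ^ (-(1 : ℝ) / 2) * (n : ℝ) ^ (-(1 : ℝ) / 2)) := by
  obtain ⟨j, rfl⟩ : ∃ j, k = j + 1 := ⟨k - 1, by omega⟩
  rw [Nat.add_sub_cancel] at ht ⊢
  set s := thetaNet θ' a b n j
  have hs : a ≤ s := left_le_thetaNet hθ'.1.le hab.le (by omega)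
  have htb : t ≤ b := ht.2.trans (thetaNet_le_right hab.le hk2)
  have hI₀ : 0 ≤ ∫ r in s..t, (b - r) ^ (θ - 1) :=
    intervalIntegral.integral_nonneg ht.1.le fun r hr => Real.rpow_nonneg (by linarith [hr.2]) _
  have hI : ∫ r in s..t, (b - r) ^ (θ - 1) ≤ (b - a) ^ θ / (θ' * n) :=
    (intervalIntegral.integral_sub_rpow_sub_one_mono_right hθ.1 ht.2
      (thetaNet_le_right hab.le hk2)).trans
      (integral_thetaNet_succ_le hθ.1 hθ'.1 hθ'.2 hab.le hk2)
  refine (hY s t hs ht.1 htb).trans (ENNReal.ofReal_le_ofReal ?_)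
  calc c₃ * (∫ r in s..t, (b - r) ^ (θ - 1)) ^ ((1 : ℝ) / 2)
      ≤ c₃ * ((b - a) ^ θ / (θ' * n)) ^ ((1 : ℝ) / 2) := by gcongr
    _ = c₃ * (b - a) ^ (θ / 2) * θ' ^ (-(1 : ℝ) / 2) * (n : ℝ) ^ (-(1 : ℝ) / 2) := by
      have hba : 0 ≤ b - a := by linarith
      rw [div_eq_mul_inv, Real.mul_rpow (Real.rpow_nonneg hba θ)
          (inv_nonneg.2 (mul_nonneg hθ'.1.le n.cast_nonneg)), mul_inv,
        Real.mul_rpow (inv_nonneg.2 hθ'.1.le) (by positivity), ← Real.rpow_mul hba,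
        Real.inv_rpow hθ'.1.le, Real.inv_rpow n.cast_nonneg, ← Real.rpow_neg hθ'.1.le,
        ← Real.rpow_neg n.cast_nonneg]
      ring_nf

/-- **Y-part of Corollary 2.3, abstract form.** If `(Y_t)_{t ∈ [a,b]} ⊆ L^p(μ)`
satisfies `‖Y_t − Y_s‖_p ≤ c₃ (∫_s^t (b−r)^{θ−1} dr)^{1/2}` for `a ≤ s < t ≤ b`, then
along the `θ'`-nets `(t_k)_{k=0}^n` with `0 < θ' ≤ θ` one has, for all `n ≥ 1`,
`1 ≤ k ≤ n` and `t ∈ (t_{k−1}, t_k]`,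
`‖Y_t − Y_{t_{k−1}}‖_p ≤ c₃ (b−a)^{θ/2} (θ')^{−1/2} n^{−1/2}`. -/
theorem corollary_2_3_Y_part_abstract
    {Ω : Type*} {mΩ : MeasurableSpace Ω} (μ : Measure Ω) [IsProbabilityMeasure μ]
    (p : ℝ≥0∞) (hp1 : 1 ≤ p) (hp2 : p ≠ ∞)
    (a b θ θ' c₃ : ℝ) (hab : a < b) (hθ : θ ∈ Set.Ioc (0 : ℝ) 1)
    (hθ' : θ' ∈ Set.Ioc (0 : ℝ) θ) (hc₃ : 0 ≤ c₃)
    (Y : ℝ → Ω → ℝ)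
    (hY_Lp : ∀ t ∈ Set.Icc a b, MemLp (Y t) p μ)
    (hY : ∀ s t : ℝ, a ≤ s → s < t → t ≤ b →
      eLpNorm (Y t - Y s) p μ
        ≤ ENNReal.ofReal (c₃ * (∫ r in s..t, (b - r) ^ (θ - 1)) ^ ((1 : ℝ) / 2)))
    (n : ℕ) (hn : 1 ≤ n) (k : ℕ) (hk1 : 1 ≤ k) (hk2 : k ≤ n)
    (t : ℝ) (ht : t ∈ Set.Ioc (thetaNet θ' a b n (k - 1)) (thetaNet θ' a b n k)) :
    eLpNorm (Y t - Y (thetaNet θ' a b n (k - 1))) p μ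
      ≤ ENNReal.ofReal
          (c₃ * (b - a) ^ (θ / 2) * θ' ^ (-(1 : ℝ) / 2) * (n : ℝ) ^ (-(1 : ℝ) / 2)) :=
  corollary_2_3_Y_part_abstract_general (mΩ := mΩ) μ p a b θ θ' c₃ hab hθ hθ' hc₃ Y hY n k hk1 hk2 t
    ht
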